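/- In the shot-noise Cox process setup with factorized intensity ν(dθ, dγ) = G₀(dθ) ρ(dγ), where G₀ is a probability measure on X and ρ(dγ) = τ γ^{−1} e^{−cγ} dγ on (0,∞) is the Lévy intensity of the gamma process with parameters τ, c > 0, assume: (a) for every k ≥ 0, almost surely P(Φ(X) = k | Λ) = e^{−Λ(γ̂)} Λ(γ̂)^k / k!, where γ̂(θ, γ) = γ; and (b) Λ satisfies the Poisson exponential-moment formula with intensity ν. Then the total number of points Φ(X) has the negative binomial distribution with parameters (τ, c/(c+1)): for every k ≥ 0, P(Φ(X) = k) = (Γ(τ + k) / (k! Γ(τ))) · (c/(c+1))^τ · (c+1)^{−k}. -/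

import Mathlib

open MeasureTheory

/-- `expNeg t = e^{-t}` for `t ∈ [0,∞]`, with `expNeg ∞ = 0`. -/
noncomputable def expNeg (t : ENNReal) : ENNReal :=
  if t = ⊤ then 0 else ENNReal.ofReal (Real.exp (-t.toReal))

/-- A random measure `Λ` satisfies the Poisson exponential-moment formula with
intensity `ν`. -/
def PoissonExpMoment {Ω Y : Type*} [MeasurableSpace Ω] [MeasurableSpace Y]
    (P : Measure Ω) (Λ : Ω → Measure Y) (ν : Measure Y) : Prop :=
  ∀ (m : ℕ), 1 ≤ m → ∀ h : Y → ENNReal, Measurable h →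
    ∀ c : Fin m → Y → ENNReal, (∀ j, Measurable (c j)) →
    ∫⁻ ω, expNeg (∫⁻ z, h z ∂(Λ ω)) * ∏ j, ∫⁻ z, c j z ∂(Λ ω) ∂P
      = expNeg (∫⁻ z, (1 - expNeg (h z)) ∂ν)
        * ∑ pt : Finpartition (Finset.univ : Finset (Fin m)),
            ∏ J ∈ pt.parts, ∫⁻ z, expNeg (h z) * ∏ j ∈ J, c j z ∂ν

/-- The Lévy intensity `ρ(dγ) = τ γ⁻¹ e^{−cγ} dγ` of the gamma process on `(0,∞)`. -/
noncomputable def gammaLevyIntensity (τ c : ℝ) : Measure ℝ :=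
  (volume.restrict (Set.Ioi (0 : ℝ))).withDensity
    (fun γ => ENNReal.ofReal (τ * γ⁻¹ * Real.exp (-(c * γ))))

/-!
Conditionally on `Λ`, `Φ(X)` is Poisson with mean `L = Λ(γ̂)`, so
`P(Φ(X) = k) = E[e^{-L} L^k] / k!`. The exponential-moment formula writes `E[e^{-L} L^k]` as
`exp (-∫ (1 - e^{-γ}) dν)` times a sum, over the set partitions of `{1, …, k}`, of products of
block integrals `∫ e^{-γ} γ^{|J|} dν`. For the gamma intensity the first integral is the Frullani
integral `τ log ((c + 1) / c)` and a block integral is `τ (|J| - 1)! / (c + 1)^{|J|}`. Finally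
`∑_π ∏_{J ∈ π} τ (|J| - 1)!` is the rising factorial `τ (τ + 1) ⋯ (τ + k - 1) = Γ(τ + k) / Γ(τ)`:
a partition of `{1, …, k}` arises from one of `{1, …, k - 1}` by adding `k` either as a new block
(weight `τ`) or to a block `J` (weight `|J|`), and the block sizes add up to `k - 1`.
-/

namespace Finpartition

open Finset
open scoped Nat

variable {α : Type*} [DecidableEq α] {s J : Finset α} {a : α}

lemma notMem_of_mem_parts (P : Finpartition s) (ha : a ∉ s) (hJ : J ∈ P.parts) : a ∉ J :=
  fun h => ha (P.le hJ h)

lemma subset_of_mem_insert_empty (P : Finpartition s) (hJ : J ∈ insert ∅ P.parts) : J ⊆ s := by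
  rcases mem_insert.1 hJ with rfl | hJ
  · exact empty_subset s
  · exact P.le hJ

lemma notMem_of_mem_insert_empty (P : Finpartition s) (ha : a ∉ s) (hJ : J ∈ insert ∅ P.parts) :
    a ∉ J :=
  fun h => ha (P.subset_of_mem_insert_empty hJ h)

lemma sup_erase_parts (P : Finpartition s) (hJ : J ∈ insert ∅ P.parts) :
    (P.parts.erase J).sup id = s \ J := by
  rcases mem_insert.1 hJ with rfl | hJ
  · rw [erase_eq_of_notMem P.empty_notMem_parts, P.sup_parts, sdiff_empty]
  · have hd : Disjoint J ((P.parts.erase J).sup id) :=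
      P.supIndep (erase_subset _ _) hJ (notMem_erase _ _)
    calc (P.parts.erase J).sup id = (J ⊔ (P.parts.erase J).sup id) \ J :=
          hd.sup_sdiff_cancel_left.symm
      _ = (insert J (P.parts.erase J)).sup id \ J := by rw [sup_insert]; rfl
      _ = s \ J := by rw [insert_erase hJ, P.sup_parts]

/-- `J = ∅` stands for a new singleton part `{a}`. -/
def insertInto (P : Finpartition s) (ha : a ∉ s) (J : Finset α) (hJ : J ∈ insert ∅ P.parts) :
    Finpartition (insert a s) :=
  (P.ofSubset (erase_subset J P.parts) (P.sup_erase_parts hJ)).extend (insert_ne_empty a J)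
    (disjoint_insert_right.2 ⟨fun h => ha (mem_sdiff.1 h).1, sdiff_disjoint⟩)
    (by rw [sup_eq_union, union_insert,
      sdiff_union_of_subset (P.subset_of_mem_insert_empty hJ)])

lemma parts_insertInto (P : Finpartition s) (ha : a ∉ s) (hJ : J ∈ insert ∅ P.parts) :
    (P.insertInto ha J hJ).parts = insert (insert a J) (P.parts.erase J) := rfl

def erasePoint (Q : Finpartition (insert a s)) (ha : a ∉ s) : Finpartition s :=
  (Q.avoid {a}).copy (by rw [sdiff_singleton_eq_erase, erase_insert ha])

lemma parts_erasePoint (Q : Finpartition (insert a s)) (ha : a ∉ s) :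
    (Q.erasePoint ha).parts = (Q.parts.image (· \ {a})).erase ∅ := rfl

lemma sdiff_singleton_mem_insert_empty (Q : Finpartition (insert a s)) (ha : a ∉ s) :
    Q.part a \ {a} ∈ insert ∅ (Q.erasePoint ha).parts := by
  rw [parts_erasePoint, mem_insert, mem_erase]
  by_cases h : Q.part a \ {a} = ∅
  · exact Or.inl h
  · exact Or.inr ⟨h, mem_image_of_mem _ (Q.part_mem.2 (mem_insert_self a s))⟩

lemma erasePoint_insertInto (P : Finpartition s) (ha : a ∉ s) (hJ : J ∈ insert ∅ P.parts) :
    (P.insertInto ha J hJ).erasePoint ha = P := by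
  ext1
  have himage : (P.parts.erase J).image (· \ {a}) = P.parts.erase J :=
    (image_congr fun d hd => (sdiff_singleton_eq_erase a d).trans
      (erase_eq_of_notMem (P.notMem_of_mem_parts ha (mem_of_mem_erase hd)))).trans image_id'
  rw [parts_erasePoint, parts_insertInto, image_insert, himage, sdiff_singleton_eq_erase,
    erase_insert (P.notMem_of_mem_insert_empty ha hJ)]
  rcases mem_insert.1 hJ with rfl | hJ
  · rw [erase_insert (notMem_erase _ _), erase_eq_of_notMem P.empty_notMem_parts]
  · rw [insert_erase hJ, erase_eq_of_notMem P.empty_notMem_parts]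

lemma insertInto_erasePoint (Q : Finpartition (insert a s)) (ha : a ∉ s) :
    (Q.erasePoint ha).insertInto ha _ (Q.sdiff_singleton_mem_insert_empty ha) = Q := by
  ext1
  have hB : Q.part a ∈ Q.parts := Q.part_mem.2 (mem_insert_self a s)
  have hrest : ∀ d ∈ Q.parts.erase (Q.part a), a ∉ d := fun d hd had =>
    (mem_erase.1 hd).1 (Q.part_eq_of_mem (mem_of_mem_erase hd) had).symm
  have hnot : Q.part a \ {a} ∉ Q.parts.erase (Q.part a) := fun h => by
    obtain ⟨x, hx⟩ := Q.nonempty_of_mem_parts (mem_of_mem_erase h)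
    exact (mem_erase.1 h).1 (Q.eq_of_mem_parts (mem_of_mem_erase h) hB hx (mem_sdiff.1 hx).1)
  have himage :
      Q.parts.image (· \ {a}) = insert (Q.part a \ {a}) (Q.parts.erase (Q.part a)) := by
    conv_lhs => rw [← insert_erase hB]
    rw [image_insert, (image_congr fun d hd => (sdiff_singleton_eq_erase a d).trans
      (erase_eq_of_notMem (hrest d hd))).trans image_id']
  rw [parts_insertInto, parts_erasePoint,
    insert_sdiff_self_of_mem (Q.mem_part (mem_insert_self a s)), himage, erase_right_comm,
    erase_insert hnot, erase_eq_of_notMem fun h => Q.empty_notMem_parts (mem_of_mem_erase h),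
    insert_erase hB]

def insertEquiv (ha : a ∉ s) :
    (Σ P : Finpartition s, {J // J ∈ insert ∅ P.parts}) ≃ Finpartition (insert a s) where
  toFun x := x.1.insertInto ha x.2 x.2.2
  invFun Q := ⟨Q.erasePoint ha, _, Q.sdiff_singleton_mem_insert_empty ha⟩
  left_inv := by
    rintro ⟨P, J, hJ⟩
    refine Sigma.subtype_ext (P.erasePoint_insertInto ha hJ) ?_
    change (P.insertInto ha J hJ).part a \ {a} = J
    rw [part_eq_of_mem _ (mem_insert_self _ _) (mem_insert_self a J), sdiff_singleton_eq_erase,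
      erase_insert (P.notMem_of_mem_insert_empty ha hJ)]
  right_inv Q := Q.insertInto_erasePoint ha

lemma sum_prod_parts_of_eq_empty {R : Type*} [CommSemiring R] (hs : s = ∅) (w : Finset α → R) :
    ∑ P : Finpartition s, ∏ J ∈ P.parts, w J = 1 := by
  subst hs
  have : Unique (Finpartition (∅ : Finset α)) :=
    inferInstanceAs (Unique (Finpartition (⊥ : Finset α)))
  rw [Fintype.sum_unique, parts_eq_empty_iff.2 rfl, prod_empty]

lemma sum_prod_parts_insert {R : Type*} [CommSemiring R] (ha : a ∉ s) (w : Finset α → R) :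
    ∑ Q : Finpartition (insert a s), ∏ K ∈ Q.parts, w K
      = ∑ P : Finpartition s, ∑ J ∈ insert ∅ P.parts,
          ∏ K ∈ insert (insert a J) (P.parts.erase J), w K := by
  rw [← (insertEquiv ha).sum_comp, Fintype.sum_sigma]
  exact sum_congr rfl fun P _ => sum_coe_sort (insert ∅ P.parts)
    fun J => ∏ K ∈ insert (insert a J) (P.parts.erase J), w K

lemma prod_insert_insert_erase_factorial {R : Type*} [CommSemiring R] (t : R)
    (P : Finpartition s) (ha : a ∉ s) (hJ : J ∈ P.parts) :
    ∏ K ∈ insert (insert a J) (P.parts.erase J), t * ((#K - 1)! : R)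
      = #J * ∏ K ∈ P.parts, t * ((#K - 1)! : R) := by
  have hJpos : 0 < #J := card_pos.2 (P.nonempty_of_mem_parts hJ)
  have hblock : t * ((#(insert a J) - 1)! : R) = #J * (t * ((#J - 1)! : R)) := by
    rw [card_insert_of_notMem (P.notMem_of_mem_parts ha hJ), Nat.add_sub_cancel,
      ← Nat.mul_factorial_pred hJpos.ne', Nat.cast_mul]
    ring
  rw [prod_insert fun h => P.notMem_of_mem_parts ha (mem_of_mem_erase h) (mem_insert_self a J),
    hblock, mul_assoc, mul_prod_erase P.parts (fun K => t * ((#K - 1)! : R)) hJ]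

theorem sum_prod_mul_factorial_card_sub_one {R : Type*} [CommSemiring R] (t : R) (s : Finset α) :
    ∑ P : Finpartition s, ∏ J ∈ P.parts, t * ((#J - 1)! : R) = ∏ i ∈ range #s, (t + i) := by
  induction s using Finset.induction_on with
  | empty =>
    rw [sum_prod_parts_of_eq_empty rfl, card_empty, prod_range_zero]
  | @insert a s ha ih =>
    rw [sum_prod_parts_insert ha, card_insert_of_notMem ha, prod_range_succ, ← ih, sum_mul]
    refine sum_congr rfl fun P _ => ?_
    have hcard : ∑ J ∈ P.parts, (#J : R) = #s := by rw [← Nat.cast_sum, P.sum_card_parts]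
    have hsingleton : t * ((#({a} : Finset α) - 1)! : R) = t := by simp
    rw [sum_insert P.empty_notMem_parts, erase_eq_of_notMem P.empty_notMem_parts,
      insert_empty, prod_insert fun h => P.notMem_of_mem_parts ha h (mem_singleton_self a),
      hsingleton, sum_congr rfl fun J hJ => prod_insert_insert_erase_factorial t P ha hJ,
      ← sum_mul, hcard]
    ring

end Finpartition

section GammaIntegrals

open Real Set Filter Topology
open scoped Nat

lemma expNeg_ofReal {x : ℝ} (hx : 0 ≤ x) :
    expNeg (ENNReal.ofReal x) = ENNReal.ofReal (exp (-x)) := by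
  rw [expNeg, if_neg ENNReal.ofReal_ne_top, ENNReal.toReal_ofReal hx]

@[fun_prop]
lemma measurable_expNeg : Measurable expNeg :=
  Measurable.ite (measurableSet_singleton ⊤) measurable_const (by fun_prop)

lemma integral_pow_mul_exp_neg_mul_Ioi (n : ℕ) {r : ℝ} (hr : 0 < r) :
    ∫ t in Ioi (0 : ℝ), t ^ n * exp (-(r * t)) = n ! / r ^ (n + 1) := by
  have h := integral_rpow_mul_exp_neg_mul_Ioi (a := n + 1) (by positivity) hr
  rw [add_sub_cancel_right, Gamma_nat_eq_factorial, ← Nat.cast_succ, rpow_natCast] at h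
  simp_rw [rpow_natCast] at h
  rw [h, one_div_pow, Nat.succ_eq_add_one]; field_simp

lemma integral_Ioi_inv_mul_exp_neg_sub_exp_neg {a b : ℝ} (ha : 0 < a) (hab : a ≤ b) :
    ∫ x in Ioi (0 : ℝ), x⁻¹ * (exp (-(a * x)) - exp (-(b * x))) = log (b / a) := by
  have hint : IntegrableOn (fun x => x⁻¹ * (exp (-(a * x)) - exp (-(b * x)))) (Ioi 0) := by
    have hmeas : Measurable fun x : ℝ => x⁻¹ * (exp (-(a * x)) - exp (-(b * x))) := by fun_prop
    refine Integrable.mono' ((integrableOn_exp_mul_Ioi (neg_neg_of_pos ha) 0).const_mul (b - a))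
      hmeas.aestronglyMeasurable ?_
    filter_upwards [ae_restrict_mem measurableSet_Ioi] with x (hx : 0 < x)
    have hsplit :
        exp (-(a * x)) - exp (-(b * x)) = exp (-(a * x)) * (1 - exp (-((b - a) * x))) := by
      rw [mul_sub, ← exp_add]; ring_nf
    have hd0 : 0 ≤ 1 - exp (-((b - a) * x)) := by
      rw [sub_nonneg, exp_le_one_iff, neg_nonpos]; exact mul_nonneg (sub_nonneg.2 hab) hx.le
    have hd1 : 1 - exp (-((b - a) * x)) ≤ (b - a) * x := by
      linarith [add_one_le_exp (-((b - a) * x))]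
    rw [Real.norm_eq_abs, hsplit, abs_of_nonneg (by positivity), neg_mul, ← mul_assoc]
    calc x⁻¹ * exp (-(a * x)) * (1 - exp (-((b - a) * x)))
        ≤ x⁻¹ * exp (-(a * x)) * ((b - a) * x) := by gcongr
      _ = (b - a) * exp (-(a * x)) := by field_simp
  have hcont : Continuous fun x : ℝ => exp (-x) := by fun_prop
  simpa using Frullani.integral_Ioi_eq (hcont.locallyIntegrable.locallyIntegrableOn _) ha
    (ha.trans_le hab) ((hcont.tendsto' 0 1 (by simp)).mono_left nhdsWithin_le_nhds)
    tendsto_exp_neg_atTop_nhds_zero (by simpa using hint)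

instance (τ c : ℝ) : SFinite (gammaLevyIntensity τ c) := by
  unfold gammaLevyIntensity; infer_instance

lemma lintegral_gammaLevyIntensity (τ c : ℝ) (f : ℝ → ENNReal) :
    ∫⁻ γ, f γ ∂gammaLevyIntensity τ c
      = ∫⁻ γ in Ioi 0, ENNReal.ofReal (τ * γ⁻¹ * exp (-(c * γ))) * f γ :=
  lintegral_withDensity_eq_lintegral_mul_non_measurable _ (by fun_prop)
    (ae_of_all _ fun _ => ENNReal.ofReal_lt_top) f

lemma lintegral_expNeg_mul_pow_gammaLevyIntensity {τ c : ℝ} (hτ : 0 ≤ τ) (hc : 0 < c + 1)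
    {m : ℕ} (hm : m ≠ 0) :
    ∫⁻ γ, expNeg (ENNReal.ofReal γ) * ENNReal.ofReal γ ^ m ∂gammaLevyIntensity τ c
      = ENNReal.ofReal (τ * (m - 1)! / (c + 1) ^ m) := by
  obtain ⟨n, rfl⟩ := Nat.exists_eq_succ_of_ne_zero hm
  have hint : IntegrableOn (fun γ => γ ^ n * exp (-((c + 1) * γ))) (Ioi 0) :=
    Integrable.of_integral_ne_zero (by rw [integral_pow_mul_exp_neg_mul_Ioi n hc]; positivity)
  have hpoint : ∀ γ ∈ Ioi (0 : ℝ), ENNReal.ofReal (τ * γ⁻¹ * exp (-(c * γ)))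
      * (expNeg (ENNReal.ofReal γ) * ENNReal.ofReal γ ^ (n + 1))
      = ENNReal.ofReal (τ * (γ ^ n * exp (-((c + 1) * γ)))) := fun γ (hγ : 0 < γ) => by
    rw [expNeg_ofReal hγ.le, ← ENNReal.ofReal_pow hγ.le, ← ENNReal.ofReal_mul (exp_nonneg _),
      ← ENNReal.ofReal_mul (by positivity), add_mul, neg_add, exp_add]
    congr 1
    field_simp
    ring
  rw [lintegral_gammaLevyIntensity, setLIntegral_congr_fun measurableSet_Ioi hpoint,
    ← ofReal_integral_eq_lintegral_ofReal (hint.const_mul τ), integral_const_mul,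
    integral_pow_mul_exp_neg_mul_Ioi n hc, Nat.succ_sub_one, mul_div_assoc]
  filter_upwards [ae_restrict_mem measurableSet_Ioi] with γ (hγ : 0 < γ)
  positivity

lemma lintegral_one_sub_expNeg_gammaLevyIntensity {τ c : ℝ} (hτ : 0 ≤ τ) (hc : 0 < c) :
    ∫⁻ γ, (1 - expNeg (ENNReal.ofReal γ)) ∂gammaLevyIntensity τ c
      = ENNReal.ofReal (τ * log ((c + 1) / c)) := by
  have hint : IntegrableOn (fun γ => γ⁻¹ * (exp (-(c * γ)) - exp (-((c + 1) * γ)))) (Ioi 0) :=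
    Integrable.of_integral_ne_zero (by
      rw [integral_Ioi_inv_mul_exp_neg_sub_exp_neg hc (by linarith)]
      exact (log_pos ((one_lt_div hc).2 (by linarith))).ne')
  have hpoint : ∀ γ ∈ Ioi (0 : ℝ), ENNReal.ofReal (τ * γ⁻¹ * exp (-(c * γ)))
      * (1 - expNeg (ENNReal.ofReal γ))
      = ENNReal.ofReal (τ * (γ⁻¹ * (exp (-(c * γ)) - exp (-((c + 1) * γ))))) :=
    fun γ (hγ : 0 < γ) => by
      rw [expNeg_ofReal hγ.le, ← ENNReal.ofReal_one, ← ENNReal.ofReal_sub _ (exp_nonneg _),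
        ← ENNReal.ofReal_mul (by positivity), add_mul, neg_add, exp_add]
      ring_nf
  rw [lintegral_gammaLevyIntensity, setLIntegral_congr_fun measurableSet_Ioi hpoint,
    ← ofReal_integral_eq_lintegral_ofReal (hint.const_mul τ), integral_const_mul,
    integral_Ioi_inv_mul_exp_neg_sub_exp_neg hc (by linarith)]
  filter_upwards [ae_restrict_mem measurableSet_Ioi] with γ (hγ : 0 < γ)
  have : exp (-((c + 1) * γ)) ≤ exp (-(c * γ)) := exp_le_exp.2 (by nlinarith)
  have : 0 ≤ exp (-(c * γ)) - exp (-((c + 1) * γ)) := by linarith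
  positivity

end GammaIntegrals

open Finset
open scoped Nat

lemma lintegral_fun_snd_of_isProbabilityMeasure {α β : Type*} [MeasurableSpace α]
    [MeasurableSpace β] (μ : Measure α) [IsProbabilityMeasure μ] (ν : Measure β) [SFinite ν]
    {f : β → ENNReal} (hf : Measurable f) : ∫⁻ z, f z.2 ∂μ.prod ν = ∫⁻ y, f y ∂ν := by
  rw [← lintegral_map hf measurable_snd, ← Measure.snd, Measure.snd_prod]

theorem PoissonExpMoment.lintegral_expNeg_mul_pow {Ω Y : Type*} [MeasurableSpace Ω]
    [MeasurableSpace Y] {P : Measure Ω} {Λ : Ω → Measure Y} {ν : Measure Y}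
    (hb : PoissonExpMoment P Λ ν) {h g : Y → ENNReal} (hh : Measurable h) (hg : Measurable g)
    (hΛ : ∫⁻ ω, expNeg (∫⁻ z, h z ∂Λ ω) ∂P = expNeg (∫⁻ z, (1 - expNeg (h z)) ∂ν)) (k : ℕ) :
    ∫⁻ ω, expNeg (∫⁻ z, h z ∂Λ ω) * (∫⁻ z, g z ∂Λ ω) ^ k ∂P
      = expNeg (∫⁻ z, (1 - expNeg (h z)) ∂ν)
        * ∑ pt : Finpartition (univ : Finset (Fin k)),
            ∏ J ∈ pt.parts, ∫⁻ z, expNeg (h z) * g z ^ #J ∂ν := by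
  rcases Nat.eq_zero_or_pos k with rfl | hk
  · rw [Finpartition.sum_prod_parts_of_eq_empty univ_eq_empty]
    simpa using hΛ
  · simpa only [prod_const, card_univ, Fintype.card_fin] using
      hb k hk h hh (fun _ => g) fun _ => hg

theorem sum_prod_lintegral_gammaLevyIntensity {α : Type*} [DecidableEq α] {τ c : ℝ}
    (hτ : 0 ≤ τ) (hc : 0 < c + 1) (s : Finset α) :
    ∑ P : Finpartition s, ∏ J ∈ P.parts,
        ∫⁻ γ, expNeg (ENNReal.ofReal γ) * ENNReal.ofReal γ ^ #J ∂gammaLevyIntensity τ c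
      = ENNReal.ofReal ((∏ i ∈ range #s, (τ + i)) / (c + 1) ^ #s) := by
  have hblock : ∀ P : Finpartition s, ∀ J ∈ P.parts,
      ∫⁻ γ, expNeg (ENNReal.ofReal γ) * ENNReal.ofReal γ ^ #J ∂gammaLevyIntensity τ c
        = ENNReal.ofReal τ * ((#J - 1)! : ENNReal) * ENNReal.ofReal ((c + 1)⁻¹) ^ #J :=
    fun P J hJ => by
      rw [lintegral_expNeg_mul_pow_gammaLevyIntensity hτ hc
          (P.nonempty_of_mem_parts hJ).card_pos.ne',
        div_eq_mul_inv, ← inv_pow, ENNReal.ofReal_mul (by positivity), ENNReal.ofReal_mul hτ,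
        ENNReal.ofReal_natCast, ENNReal.ofReal_pow (by positivity)]
  calc _ = ∑ P : Finpartition s, (∏ J ∈ P.parts, ENNReal.ofReal τ * ((#J - 1)! : ENNReal))
          * ENNReal.ofReal ((c + 1)⁻¹) ^ #s :=
        sum_congr rfl fun P _ => by
          rw [prod_congr rfl (hblock P), prod_mul_distrib, prod_pow_eq_pow_sum, P.sum_card_parts]
    _ = (∏ i ∈ range #s, (ENNReal.ofReal τ + i)) * ENNReal.ofReal ((c + 1)⁻¹) ^ #s := by
        rw [← sum_mul, Finpartition.sum_prod_mul_factorial_card_sub_one]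
    _ = _ := by
        rw [div_eq_mul_inv, ← inv_pow, ENNReal.ofReal_mul (prod_nonneg fun i _ => by positivity),
          ENNReal.ofReal_prod_of_nonneg (fun i _ => by positivity),
          ENNReal.ofReal_pow (by positivity)]
        congr 1
        exact prod_congr rfl fun i _ => by
          rw [ENNReal.ofReal_add hτ i.cast_nonneg, ENNReal.ofReal_natCast]

lemma Real.Gamma_add_nat_eq_mul_prod {τ : ℝ} (hτ : 0 < τ) (k : ℕ) :
    Real.Gamma (τ + k) = Real.Gamma τ * ∏ i ∈ range k, (τ + i) := by
  induction k with
  | zero => simp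
  | succ n ih =>
    rw [Nat.cast_succ, ← add_assoc, Real.Gamma_add_one (by positivity), ih, prod_range_succ]
    ring

lemma expNeg_mul_ofReal_prod_div_factorial_eq {τ c : ℝ} (hτ : 0 < τ) (hc : 0 < c) (k : ℕ) :
    expNeg (ENNReal.ofReal (τ * Real.log ((c + 1) / c)))
        * ENNReal.ofReal ((∏ i ∈ range k, (τ + i)) / (c + 1) ^ k) / (k ! : ENNReal)
      = ENNReal.ofReal (Real.Gamma (τ + k) / (k ! * Real.Gamma τ)
          * (c / (c + 1)) ^ τ * ((c + 1) ^ k)⁻¹) := by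
  have hlog : 0 ≤ τ * Real.log ((c + 1) / c) :=
    mul_nonneg hτ.le (Real.log_nonneg ((one_le_div hc).2 (by linarith)))
  have hexp : Real.exp (-(τ * Real.log ((c + 1) / c))) = (c / (c + 1)) ^ τ := by
    rw [Real.rpow_def_of_pos (by positivity), ← inv_div, Real.log_inv]
    ring_nf
  rw [expNeg_ofReal hlog, hexp, ← ENNReal.ofReal_mul (by positivity), ← ENNReal.ofReal_natCast,
    ← ENNReal.ofReal_div_of_pos (by positivity), Real.Gamma_add_nat_eq_mul_prod hτ]
  congr 1
  have := (Real.Gamma_pos_of_pos hτ).ne'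
  field_simp

theorem sncp_gamma_number_of_points_negative_binomial_general
    {Ω X : Type*} [MeasurableSpace Ω] [MeasurableSpace X]
    (P : Measure Ω)
    (G₀ : Measure X) [IsProbabilityMeasure G₀]
    (τ c : ℝ) (hτ : 0 < τ) (hc : 0 < c)
    (Λ : Ω → Measure (X × ℝ))
    -- Poisson Laplace functional of `Λ`, with intensity `ν = G₀ ⊗ ρ`
    (hΛ : ∀ h : X × ℝ → ENNReal, Measurable h →
      ∫⁻ ω, expNeg (∫⁻ z, h z ∂(Λ ω)) ∂P
        = expNeg (∫⁻ z, (1 - expNeg (h z)) ∂(G₀.prod (gammaLevyIntensity τ c))))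
    (Φ : Ω → Measure X) (hΦmeas : Measurable Φ)
    -- (a) conditionally on `Λ`, the number of points is Poisson with mean `Λ(γ̂)`
    (ha : ∀ k : ℕ, ∀ G : Measure (X × ℝ) → ENNReal, Measurable G →
      ∫⁻ ω, (if Φ ω Set.univ = (k : ENNReal) then 1 else 0) * G (Λ ω) ∂P
        = ∫⁻ ω, expNeg (∫⁻ z, ENNReal.ofReal z.2 ∂(Λ ω))
            * (∫⁻ z, ENNReal.ofReal z.2 ∂(Λ ω)) ^ k / (Nat.factorial k : ENNReal)
            * G (Λ ω) ∂P)
    -- (b) Poisson exponential-moment formula for `Λ` with intensity `ν = G₀ ⊗ ρ`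
    (hb : PoissonExpMoment P Λ (G₀.prod (gammaLevyIntensity τ c))) :
    ∀ k : ℕ,
      P {ω | Φ ω Set.univ = (k : ENNReal)}
        = ENNReal.ofReal
            (Real.Gamma (τ + k) / (Nat.factorial k * Real.Gamma τ)
              * (c / (c + 1)) ^ τ * ((c + 1) ^ k)⁻¹) := by
  intro k
  have hγ : Measurable fun z : X × ℝ => ENNReal.ofReal z.2 := by fun_prop
  have hS : MeasurableSet {ω | Φ ω Set.univ = (k : ENNReal)} :=
    (Measure.measurable_coe MeasurableSet.univ).comp hΦmeas (measurableSet_singleton _)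
  have hsnd : ∀ m : ℕ, ∫⁻ z, expNeg (ENNReal.ofReal z.2) * ENNReal.ofReal z.2 ^ m
      ∂G₀.prod (gammaLevyIntensity τ c)
      = ∫⁻ γ, expNeg (ENNReal.ofReal γ) * ENNReal.ofReal γ ^ m ∂gammaLevyIntensity τ c :=
    fun m => lintegral_fun_snd_of_isProbabilityMeasure _ _
      (f := fun γ => expNeg (ENNReal.ofReal γ) * ENNReal.ofReal γ ^ m) (by fun_prop)
  calc P {ω | Φ ω Set.univ = (k : ENNReal)}
      = ∫⁻ ω, (if Φ ω Set.univ = (k : ENNReal) then 1 else 0) * 1 ∂P := by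
        rw [← lintegral_indicator_one hS]
        congr 1 with ω
        simp [Set.indicator_apply]
    _ = (∫⁻ ω, expNeg (∫⁻ z, ENNReal.ofReal z.2 ∂Λ ω) * (∫⁻ z, ENNReal.ofReal z.2 ∂Λ ω) ^ k ∂P)
          / (k ! : ENNReal) := by
        rw [ha k _ measurable_const]
        simp_rw [mul_one, div_eq_mul_inv]
        exact lintegral_mul_const' _ _ (by simp [Nat.factorial_ne_zero])
    _ = expNeg (ENNReal.ofReal (τ * Real.log ((c + 1) / c)))
          * ENNReal.ofReal ((∏ i ∈ range k, (τ + i)) / (c + 1) ^ k) / (k ! : ENNReal) := by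
        rw [hb.lintegral_expNeg_mul_pow hγ hγ (hΛ _ hγ),
          lintegral_fun_snd_of_isProbabilityMeasure _ _
            (f := fun γ => 1 - expNeg (ENNReal.ofReal γ)) (by fun_prop),
          lintegral_one_sub_expNeg_gammaLevyIntensity hτ.le hc]
        simp only [hsnd]
        rw [sum_prod_lintegral_gammaLevyIntensity hτ.le (by linarith), card_univ, Fintype.card_fin]
    _ = _ := expNeg_mul_ofReal_prod_div_factorial_eq hτ hc k

/-- the number of points of a Thomas-gamma shot-noise Cox process
is negative binomial.  With `ν = G₀ ⊗ ρ` and `ρ(dγ) = τ γ⁻¹ e^{−cγ} dγ` the Lévy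
intensity of the gamma process, `Φ(X)` is negative binomial with parameters
`(τ, c/(c+1))`: `P(Φ(X)=k) = Γ(τ+k)/(k! Γ(τ)) · (c/(c+1))^τ · (c+1)^{−k}`. -/
theorem sncp_gamma_number_of_points_negative_binomial
    {Ω X : Type*} [MeasurableSpace Ω] [MeasurableSpace X]
    (P : Measure Ω) [IsProbabilityMeasure P]
    (μ : Measure X) [SigmaFinite μ]
    (G₀ : Measure X) [IsProbabilityMeasure G₀]
    (τ c : ℝ) (hτ : 0 < τ) (hc : 0 < c)
    (κ : X → X → ENNReal) (hκ : Measurable (Function.uncurry κ))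
    (hκ1 : ∀ θ : X, ∫⁻ y, κ y θ ∂μ = 1)
    (Λ : Ω → Measure (X × ℝ)) (hΛmeas : Measurable Λ)
    -- Poisson Laplace functional of `Λ`, with intensity `ν = G₀ ⊗ ρ`
    (hΛ : ∀ h : X × ℝ → ENNReal, Measurable h →
      ∫⁻ ω, expNeg (∫⁻ z, h z ∂(Λ ω)) ∂P
        = expNeg (∫⁻ z, (1 - expNeg (h z)) ∂(G₀.prod (gammaLevyIntensity τ c))))
    (Φ : Ω → Measure X) (hΦmeas : Measurable Φ)
    -- `Φ` is conditionally Poisson given `Λ`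
    (hcond : ∀ f : X → ENNReal, Measurable f →
      ∀ G : Measure (X × ℝ) → ENNReal, Measurable G →
      ∫⁻ ω, expNeg (∫⁻ y, f y ∂(Φ ω)) * G (Λ ω) ∂P
        = ∫⁻ ω, expNeg (∫⁻ y, (1 - expNeg (f y))
            * (∫⁻ z, ENNReal.ofReal z.2 * κ y z.1 ∂(Λ ω)) ∂μ) * G (Λ ω) ∂P)
    -- (a) conditionally on `Λ`, the number of points is Poisson with mean `Λ(γ̂)`
    (ha : ∀ k : ℕ, ∀ G : Measure (X × ℝ) → ENNReal, Measurable G →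
      ∫⁻ ω, (if Φ ω Set.univ = (k : ENNReal) then 1 else 0) * G (Λ ω) ∂P
        = ∫⁻ ω, expNeg (∫⁻ z, ENNReal.ofReal z.2 ∂(Λ ω))
            * (∫⁻ z, ENNReal.ofReal z.2 ∂(Λ ω)) ^ k / (Nat.factorial k : ENNReal)
            * G (Λ ω) ∂P)
    -- (b) Poisson exponential-moment formula for `Λ` with intensity `ν = G₀ ⊗ ρ`
    (hb : PoissonExpMoment P Λ (G₀.prod (gammaLevyIntensity τ c))) :
    ∀ k : ℕ,
      P {ω | Φ ω Set.univ = (k : ENNReal)}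
        = ENNReal.ofReal
            (Real.Gamma (τ + k) / (Nat.factorial k * Real.Gamma τ)
              * (c / (c + 1)) ^ τ * ((c + 1) ^ k)⁻¹) :=
  sncp_gamma_number_of_points_negative_binomial_general P G₀ τ c hτ hc Λ hΛ Φ hΦmeas ha hb
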